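/- Let G be a finite group and C_1,…,C_r conjugacy classes of G ordered so that equal classes are consecutive, with P the associated partition of {1,…,r} and B_P := π^{−1}(S_P). Let T(C_1,…,C_r) be the set of tuples (τ_1,…,τ_r) ∈ G^r with τ_1⋯τ_r = 1, ⟨τ_1,…,τ_r⟩ = G, and τ_i ∈ C_{σ(i)} for some permutation σ ∈ S_r, and let T^o(C_1,…,C_r) ⊆ T(C_1,…,C_r) be the subset of tuples with τ_i ∈ C_i for every i. Then every orbit of B_r × G on T(C_1,…,C_r) (B_r acting by braid moves, G by diagonal conjugation) meets T^o(C_1,…,C_r), and two tuples of T^o(C_1,…,C_r) lie in the same B_r × G-orbit if and only if they lie in the same B_P × G-orbit; hence inclusion induces a bijection between the B_P × G-orbits on T^o(C_1,…,C_r) and the B_r × G-orbits on T(C_1,…,C_r). -/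

import Mathlib

/-- The braid move `Q_i` (`0`-indexed): it replaces the entries in positions `i` and `i+1`
of a tuple `(g_0, …, g_{r-1})` by `g_{i+1}` and `g_{i+1}⁻¹ * g_i * g_{i+1}` respectively,
leaving all other entries unchanged.  (For `i + 1 ≥ r` it is the identity.) -/
def braidMove {G : Type*} [Group G] {r : ℕ} (i : ℕ) (g : Fin r → G) : Fin r → G :=
  fun m =>
    if _hm : (m : ℕ) = i then
      if h : i + 1 < r then g ⟨i + 1, h⟩ else g m
    else if hm' : (m : ℕ) = i + 1 then
      (g m)⁻¹ * g ⟨i, by have := m.isLt; omega⟩ * g m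
    else g m

/-- The braid relations on `n` generators `Q_0, …, Q_{n-1}`. -/
def braidRels (n : ℕ) : Set (FreeGroup (Fin n)) :=
  {w | (∃ i j : Fin n, (i : ℕ) + 1 = (j : ℕ) ∧
          w = FreeGroup.of i * FreeGroup.of j * FreeGroup.of i *
              (FreeGroup.of j * FreeGroup.of i * FreeGroup.of j)⁻¹) ∨
       (∃ i j : Fin n, (i : ℕ) + 2 ≤ (j : ℕ) ∧
          w = FreeGroup.of i * FreeGroup.of j * (FreeGroup.of j * FreeGroup.of i)⁻¹)}

/-- The Artin braid group on `r` strings, presented by `r - 1` generators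
subject to the braid relations. -/
abbrev BraidGroup (r : ℕ) : Type := PresentedGroup (braidRels (r - 1))

/-- Diagonal conjugation of a tuple by a group element `h`. -/
def diagConj {G : Type*} [Group G] {n : ℕ} (h : G) (g : Fin n → G) : Fin n → G :=
  fun m => h⁻¹ * g m * h

/-- The set `T^o(C_1, …, C_r)` of generating product-one tuples with `τ_i ∈ C_i`
for every `i`. -/
def nielsenTuples {G : Type*} [Group G] {r : ℕ} (C : Fin r → Set G) : Set (Fin r → G) :=
  {τ | (∀ m, τ m ∈ C m) ∧ (List.ofFn τ).prod = 1 ∧ Subgroup.closure (Set.range τ) = ⊤}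
/-- The set `T(C_1, …, C_r)` of generating product-one tuples with `τ_i ∈ C_{σ(i)}`
for some permutation `σ`. -/
def braidableTuples {G : Type*} [Group G] {r : ℕ} (C : Fin r → Set G) : Set (Fin r → G) :=
  {τ | (∃ σ : Equiv.Perm (Fin r), ∀ m, τ m ∈ C (σ m)) ∧ (List.ofFn τ).prod = 1 ∧
    Subgroup.closure (Set.range τ) = ⊤}

namespace BraidAux

variable {G : Type*} [Group G] {r : ℕ}

lemma braidMove_apply_ne (i : ℕ) (g : Fin r → G) (m : Fin r)
    (h1 : (m : ℕ) ≠ i) (h2 : (m : ℕ) ≠ i + 1) : braidMove i g m = g m := by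
  simp [braidMove, h1, h2]

lemma braidMove_apply_left (i : ℕ) (h : i + 1 < r) (g : Fin r → G) :
    braidMove i g ⟨i, by omega⟩ = g ⟨i + 1, h⟩ := by
  simp [braidMove, h]

lemma braidMove_apply_right (i : ℕ) (h : i + 1 < r) (g : Fin r → G) :
    braidMove i g ⟨i + 1, h⟩ = (g ⟨i + 1, h⟩)⁻¹ * g ⟨i, by omega⟩ * g ⟨i + 1, h⟩ := by
  simp [braidMove]

lemma prod_ofFn_eq (i : ℕ) : ∀ (r : ℕ) (h : i + 1 < r) (g g' : Fin r → G),
    (∀ m : Fin r, (m : ℕ) ≠ i → (m : ℕ) ≠ i + 1 → g' m = g m) →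
    g' ⟨i, by omega⟩ * g' ⟨i + 1, h⟩ = g ⟨i, by omega⟩ * g ⟨i + 1, h⟩ →
    (List.ofFn g').prod = (List.ofFn g).prod := by
  induction i with
  | zero =>
    intro r h g g' hne hswap
    obtain ⟨n, rfl⟩ : ∃ n, r = n + 2 := ⟨r - 2, by omega⟩
    rw [List.ofFn_succ, List.ofFn_succ, List.ofFn_succ, List.ofFn_succ,
      List.prod_cons, List.prod_cons, List.prod_cons, List.prod_cons,
      ← mul_assoc, ← mul_assoc]
    have h1 : g' 0 * g' (Fin.succ 0) = g 0 * g (Fin.succ 0) := hswap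
    rw [h1]
    have h2 : (fun i : Fin n => g' i.succ.succ) = fun i => g i.succ.succ := by
      funext m
      exact hne m.succ.succ (by simp only [Fin.val_succ]; omega)
        (by simp only [Fin.val_succ]; omega)
    rw [h2]
  | succ i ih =>
    intro r h g g' hne hswap
    obtain ⟨n, rfl⟩ : ∃ n, r = n + 1 := ⟨r - 1, by omega⟩
    rw [List.ofFn_succ, List.ofFn_succ, List.prod_cons, List.prod_cons,
      hne 0 (by simp) (by simp)]
    congr 1
    refine ih n (by omega) (fun m => g m.succ) (fun m => g' m.succ)
      (fun m h1 h2 => hne m.succ (by simp only [Fin.val_succ]; omega) (by simp only [Fin.val_succ]; omega)) ?_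
    exact hswap

lemma closure_range_braid (i : ℕ) (h : i + 1 < r) (g : Fin r → G) :
    Subgroup.closure (Set.range (braidMove i g)) = Subgroup.closure (Set.range g) := by
  apply le_antisymm <;> rw [Subgroup.closure_le] <;> rintro x ⟨m, rfl⟩
  · by_cases h1 : (m : ℕ) = i
    · obtain rfl : m = ⟨i, Nat.lt_of_succ_lt h⟩ := Fin.ext h1
      rw [braidMove_apply_left i h]
      exact Subgroup.subset_closure ⟨_, rfl⟩
    by_cases h2 : (m : ℕ) = i + 1
    · obtain rfl : m = ⟨i + 1, h⟩ := Fin.ext h2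
      rw [braidMove_apply_right i h]
      exact SetLike.mem_coe.2 (mul_mem (mul_mem (inv_mem (Subgroup.subset_closure ⟨_, rfl⟩))
        (Subgroup.subset_closure ⟨_, rfl⟩)) (Subgroup.subset_closure ⟨_, rfl⟩))
    · rw [braidMove_apply_ne i g m h1 h2]
      exact Subgroup.subset_closure ⟨_, rfl⟩
  · by_cases h1 : (m : ℕ) = i
    · obtain rfl : m = ⟨i, Nat.lt_of_succ_lt h⟩ := Fin.ext h1
      have : g ⟨i, by omega⟩ = braidMove i g ⟨i, by omega⟩ * braidMove i g ⟨i + 1, h⟩ *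
          (braidMove i g ⟨i, by omega⟩)⁻¹ := by
        rw [braidMove_apply_left i h, braidMove_apply_right i h]
        group
      rw [this]
      exact SetLike.mem_coe.2 (mul_mem (mul_mem (Subgroup.subset_closure ⟨_, rfl⟩)
        (Subgroup.subset_closure ⟨_, rfl⟩)) (inv_mem (Subgroup.subset_closure ⟨_, rfl⟩)))
    by_cases h2 : (m : ℕ) = i + 1
    · obtain rfl : m = ⟨i + 1, h⟩ := Fin.ext h2
      have : g ⟨i + 1, h⟩ = braidMove i g ⟨i, by omega⟩ := (braidMove_apply_left i h g).symm
      rw [this]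
      exact Subgroup.subset_closure ⟨_, rfl⟩
    · rw [← braidMove_apply_ne i g m h1 h2]
      exact Subgroup.subset_closure ⟨_, rfl⟩

lemma braidMove_mem_class (i : ℕ) (h : i + 1 < r) (D : Fin r → Set G)
    (hD : ∀ m, ∃ x, D m = {y | IsConj x y}) (g : Fin r → G) (hg : ∀ m, g m ∈ D m)
    (m : Fin r) :
    braidMove i g m ∈ D (Equiv.swap ⟨i, by omega⟩ ⟨i + 1, h⟩ m) := by
  by_cases h1 : (m : ℕ) = i
  · obtain rfl : m = ⟨i, Nat.lt_of_succ_lt h⟩ := Fin.ext h1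
    rw [braidMove_apply_left i h, Equiv.swap_apply_left]
    exact hg _
  by_cases h2 : (m : ℕ) = i + 1
  · obtain rfl : m = ⟨i + 1, h⟩ := Fin.ext h2
    rw [braidMove_apply_right i h, Equiv.swap_apply_right]
    obtain ⟨x, hx⟩ := hD ⟨i, by omega⟩
    have := hg ⟨i, by omega⟩
    rw [hx] at this ⊢
    exact this.trans (by rw [isConj_iff]; exact ⟨(g ⟨i + 1, h⟩)⁻¹, by group⟩)
  · rw [braidMove_apply_ne i g m h1 h2,
      Equiv.swap_apply_of_ne_of_ne (fun hc => h1 (by rw [hc])) (fun hc => h2 (by rw [hc]))]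
    exact hg m

lemma eq_top_of_adjacent_swaps (hr : 2 ≤ r) (H : Subgroup (Equiv.Perm (Fin r)))
    (hH : ∀ (i : ℕ) (h : i + 1 < r), Equiv.swap ⟨i, by omega⟩ ⟨i + 1, h⟩ ∈ H) : H = ⊤ := by
  rw [eq_top_iff, ← Equiv.Perm.closure_isSwap, Subgroup.closure_le]
  have key : ∀ (d : ℕ) (a b : Fin r), (a : ℕ) < b → (b : ℕ) - a ≤ d → Equiv.swap a b ∈ H := by
    intro d
    induction d with
    | zero => intro a b hab hd; omega
    | succ d ih =>
      intro a b hab hd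
      have hbr : (b : ℕ) < r := b.isLt
      by_cases hba : (b : ℕ) = (a : ℕ) + 1
      · have har : (a : ℕ) + 1 < r := by omega
        have h0 := hH (a : ℕ) har
        simp only [Fin.eta] at h0
        have e2 : (⟨(a : ℕ) + 1, har⟩ : Fin r) = b := Fin.ext hba.symm
        rwa [e2] at h0
      · have hcr : (b : ℕ) - 1 < r := by omega
        set c : Fin r := ⟨(b : ℕ) - 1, hcr⟩ with hcdef
        have hcv : (c : ℕ) = (b : ℕ) - 1 := rfl
        have hcb : Equiv.swap c b ∈ H := by
          have har : ((b : ℕ) - 1) + 1 < r := by omega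
          have h0 := hH ((b : ℕ) - 1) har
          have e2 : (⟨(b : ℕ) - 1 + 1, har⟩ : Fin r) = b := Fin.ext (by simp; omega)
          rw [e2] at h0
          exact h0
        have hac : Equiv.swap a c ∈ H := ih a c (by rw [hcv]; omega) (by rw [hcv]; omega)
        have hne1 : a ≠ c := Fin.ne_of_val_ne (by rw [hcv]; omega)
        have hne2 : a ≠ b := Fin.ne_of_val_ne (by omega)
        have hs := Equiv.swap_mul_swap_mul_swap hne1 hne2
        rw [Equiv.swap_comm b a] at hs
        rw [← hs]
        exact mul_mem (mul_mem hcb hac) hcb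
  rintro σ ⟨a, b, hab, rfl⟩
  rcases lt_or_gt_of_ne (fun hcon : (a : ℕ) = (b : ℕ) => hab (Fin.ext hcon)) with hlt | hgt
  · exact key r a b hlt (by have := b.isLt; omega)
  · rw [Equiv.swap_comm]
    exact key r b a hgt (by have := a.isLt; omega)

end BraidAux

/-- Let `G` be a finite group and `C_1, …, C_r` conjugacy classes of `G` ordered so that
equal classes are consecutive.  Let `π : B_r → S_r` be the canonical surjection and let
`B_r` act on `G^r` via the braid moves (through a homomorphism `φ` sending each generator
to the corresponding braid move), a tuple `b ∈ B_P = π⁻¹(S_P)` being characterised by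
`C_{π(b)(m)} = C_m` for all `m`.  Then every `B_r × G`-orbit on `T(C_1, …, C_r)` meets
`T^o(C_1, …, C_r)`, and two tuples of `T^o(C_1, …, C_r)` lie in the same `B_r × G`-orbit if
and only if they lie in the same `B_P × G`-orbit; hence inclusion induces a bijection
between the `B_P × G`-orbits on `T^o` and the `B_r × G`-orbits on `T`. -/
theorem braid_orbits_T_correspond_to_parabolic_orbits_To
    {G : Type*} [Group G] [Fintype G] {r : ℕ} (hr : 2 ≤ r)
    (C : Fin r → Set G)
    (hC : ∀ m : Fin r, ∃ x : G, C m = {y | IsConj x y})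
    (hord : ∀ i j k : Fin r, i ≤ k → k ≤ j → C i = C j → C k = C i)
    (π : BraidGroup r →* Equiv.Perm (Fin r))
    (hπ : ∀ m : Fin (r - 1),
      π (PresentedGroup.of m) =
        Equiv.swap ⟨(m : ℕ), by have := m.isLt; omega⟩
          ⟨(m : ℕ) + 1, by have := m.isLt; omega⟩)
    (φ : BraidGroup r →* Equiv.Perm (Fin r → G))
    (hφ : ∀ (m : Fin (r - 1)) (g : Fin r → G),
      φ (PresentedGroup.of m) g = braidMove (m : ℕ) g) :
    (∀ τ ∈ braidableTuples C, ∃ (b : BraidGroup r) (h : G),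
      diagConj h (φ b τ) ∈ nielsenTuples C) ∧
    (∀ τ ∈ nielsenTuples C, ∀ τ' ∈ nielsenTuples C,
      ((∃ (b : BraidGroup r) (h : G), τ' = diagConj h (φ b τ)) ↔
       (∃ (b : BraidGroup r) (h : G), (∀ m : Fin r, C (π b m) = C m) ∧
          τ' = diagConj h (φ b τ)))) := by
  classical
  have classEq : ∀ D E : Set G, (∃ x, D = {y | IsConj x y}) → (∃ x, E = {y | IsConj x y}) →
      ∀ z, z ∈ D → z ∈ E → D = E := by
    rintro D E ⟨x, rfl⟩ ⟨x', rfl⟩ z hz hz'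
    simp only [Set.mem_setOf_eq] at hz hz'
    ext w
    simp only [Set.mem_setOf_eq]
    exact ⟨fun hw => (hz'.trans hz.symm).trans hw, fun hw => (hz.trans hz'.symm).trans hw⟩
  have conjStable : ∀ D : Set G, (∃ x, D = {y | IsConj x y}) →
      ∀ z ∈ D, ∀ h : G, h⁻¹ * z * h ∈ D := by
    rintro D ⟨x, rfl⟩ z hz h
    simp only [Set.mem_setOf_eq] at hz ⊢
    exact hz.trans (isConj_iff.2 ⟨h⁻¹, by group⟩)
  have key : ∀ b : BraidGroup r,
      (∀ g : Fin r → G, (List.ofFn (φ b g)).prod = (List.ofFn g).prod) ∧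
      (∀ g : Fin r → G, Subgroup.closure (Set.range (φ b g)) = Subgroup.closure (Set.range g)) ∧
      (∀ D : Fin r → Set G, (∀ m, ∃ x, D m = {y | IsConj x y}) → ∀ g : Fin r → G,
        (∀ m, g m ∈ D m) → ∀ m, φ b g m ∈ D ((π b)⁻¹ m)) := by
    intro b
    have hb : b ∈ Subgroup.closure
        (Set.range (PresentedGroup.of : Fin (r - 1) → BraidGroup r)) := by
      rw [PresentedGroup.closure_range_of]; trivial
    induction hb using Subgroup.closure_induction with
    | mem x hx =>
      obtain ⟨m, rfl⟩ := hx
      have hm : (m : ℕ) + 1 < r := by have := m.isLt; omega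
      refine ⟨fun g => ?_, fun g => ?_, fun D hD g hg k => ?_⟩
      · rw [hφ m g]
        exact BraidAux.prod_ofFn_eq (m : ℕ) r hm g (braidMove (m : ℕ) g)
          (fun k h1 h2 => BraidAux.braidMove_apply_ne _ g k h1 h2)
          (by rw [BraidAux.braidMove_apply_left _ hm, BraidAux.braidMove_apply_right _ hm]
              group)
      · rw [hφ m g]
        exact BraidAux.closure_range_braid (m : ℕ) hm g
      · rw [hφ m g, hπ m, Equiv.swap_inv]
        exact BraidAux.braidMove_mem_class (m : ℕ) hm D hD g hg k
    | one =>
      refine ⟨fun g => ?_, fun g => ?_, fun D hD g hg k => ?_⟩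
      · rw [map_one, Equiv.Perm.one_apply]
      · rw [map_one, Equiv.Perm.one_apply]
      · simp only [map_one, inv_one, Equiv.Perm.one_apply]
        exact hg k
    | mul x y hx hy ihx ihy =>
      refine ⟨fun g => ?_, fun g => ?_, fun D hD g hg k => ?_⟩
      · rw [map_mul, Equiv.Perm.mul_apply, ihx.1, ihy.1]
      · rw [map_mul, Equiv.Perm.mul_apply, ihx.2.1, ihy.2.1]
      · have h1 : ∀ k, φ y g k ∈ D ((π y)⁻¹ k) := ihy.2.2 D hD g hg
        have h2 := ihx.2.2 (fun k => D ((π y)⁻¹ k)) (fun k => hD _) (φ y g) h1 k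
        simp only [map_mul, mul_inv_rev, Equiv.Perm.mul_apply]
        exact h2
    | inv x hx ihx =>
      have hcancel : ∀ g : Fin r → G, φ x (φ x⁻¹ g) = g := by
        intro g
        rw [← Equiv.Perm.mul_apply, ← map_mul, mul_inv_cancel, map_one, Equiv.Perm.one_apply]
      refine ⟨fun g => ?_, fun g => ?_, fun D hD g hg k => ?_⟩
      · have := ihx.1 (φ x⁻¹ g); rw [hcancel g] at this; exact this.symm
      · have := ihx.2.1 (φ x⁻¹ g); rw [hcancel g] at this; exact this.symm
      · have h1 : ∀ m, φ x (φ x⁻¹ g) m ∈ {y | IsConj (φ x⁻¹ g ((π x)⁻¹ m)) y} :=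
          ihx.2.2 (fun m => {y | IsConj (φ x⁻¹ g m) y}) (fun m => ⟨_, rfl⟩) (φ x⁻¹ g)
            (fun m => IsConj.refl _)
        rw [hcancel g] at h1
        have hDE : ∀ m, D m = {y | IsConj (φ x⁻¹ g ((π x)⁻¹ m)) y} :=
          fun m => classEq _ _ (hD m) ⟨_, rfl⟩ (g m) (hg m) (h1 m)
        have goalEq : D ((π x⁻¹)⁻¹ k) = {y | IsConj (φ x⁻¹ g k) y} := by
          rw [map_inv, inv_inv]
          have := hDE (π x k)
          rwa [Equiv.Perm.inv_def, Equiv.symm_apply_apply] at this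
        rw [goalEq]
        exact Set.mem_setOf.2 (IsConj.refl _)
  have hsurj : ∀ σ : Equiv.Perm (Fin r), ∃ b : BraidGroup r, π b = σ := by
    have htop : π.range = ⊤ := by
      apply BraidAux.eq_top_of_adjacent_swaps hr
      intro i hi
      have hi' : i < r - 1 := by omega
      exact ⟨PresentedGroup.of ⟨i, hi'⟩, by rw [hπ ⟨i, hi'⟩]⟩
    intro σ
    have : σ ∈ π.range := htop ▸ Subgroup.mem_top σ
    exact this
  constructor
  · rintro τ ⟨⟨σ, hσ⟩, hprod, hclo⟩
    obtain ⟨b, hb⟩ := hsurj σ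
    have hdiag : diagConj (1 : G) (φ b τ) = φ b τ := by
      funext m; simp [diagConj]
    refine ⟨b, 1, ?_⟩
    rw [hdiag]
    refine ⟨fun m => ?_, ?_, ?_⟩
    · have := (key b).2.2 (fun m => C (σ m)) (fun m => hC (σ m)) τ hσ m
      simp only [hb, Equiv.Perm.inv_def, Equiv.apply_symm_apply] at this
      exact this
    · rw [(key b).1 τ]; exact hprod
    · rw [(key b).2.1 τ]; exact hclo
  · intro τ hτ τ' hτ'
    constructor
    · rintro ⟨b, h, rfl⟩
      refine ⟨b, h, fun m => ?_, rfl⟩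
      have h1 : ∀ k, φ b τ k ∈ C ((π b)⁻¹ k) := (key b).2.2 C hC τ hτ.1
      have h2 : ∀ k, diagConj h (φ b τ) k ∈ C ((π b)⁻¹ k) := fun k =>
        conjStable _ (hC _) _ (h1 k) h
      have h3 : ∀ k, C ((π b)⁻¹ k) = C k := fun k =>
        classEq _ _ (hC _) (hC _) _ (h2 k) (hτ'.1 k)
      have h4 := h3 (π b m)
      rw [Equiv.Perm.inv_def, Equiv.symm_apply_apply] at h4
      exact h4.symm
    · rintro ⟨b, h, _, rfl⟩
      exact ⟨b, h, rfl⟩
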